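/- For every γ ≥ 0 and every state a ∈ S, the ski-rental cost-to-go function satisfies V(γ, a) = c^f(a) − Σ_{i∈sub(a)} β*_i(γ)·π(i)/π(a). -/

import Mathlib

open scoped Classical
open Finset

/-- A finite tree-structured Markov chain: a finite state space partitioned into
levels `0, …, L-1`, a root `r` at level `0`, a parent map `pa` (with `pa r = r` by
convention), and transition probabilities `p i ∈ (0,1]` of being reached from the
parent, with `p r = 1`. -/
structure TreeMC (S : Type*) [Fintype S] [DecidableEq S] where
  /-- the number of levels -/
  L : ℕ
  /-- the root -/
  r : S
  /-- the parent map (with `pa r = r` by convention) -/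
  pa : S → S
  /-- the level of each state -/
  level : S → ℕ
  /-- the probability of being reached from the parent -/
  p : S → ℝ
  level_lt : ∀ i, level i < L
  level_r : level r = 0
  root_unique : ∀ i, level i = 0 → i = r
  pa_r : pa r = r
  level_pa : ∀ i, i ≠ r → level (pa i) + 1 = level i
  p_pos : ∀ i, 0 < p i
  p_le_one : ∀ i, p i ≤ 1
  p_r : p r = 1

namespace TreeMC

variable {S : Type*} [Fintype S] [DecidableEq S] (M : TreeMC S)

/-- The ancestors of `i`: states on the path from the root to `i` (both included). -/
noncomputable def anc (i : S) : Finset S :=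
  Finset.univ.filter fun a => ∃ n : ℕ, M.pa^[n] i = a

/-- The subtree of `i`: all states having `i` as an ancestor. -/
noncomputable def subt (i : S) : Finset S :=
  Finset.univ.filter fun k => i ∈ M.anc k

/-- The subtree of a set of states. -/
noncomputable def subF (X : Finset S) : Finset S :=
  Finset.univ.filter fun k => ∃ i ∈ X, k ∈ M.subt i

/-- `π i`: the probability that a job passes through state `i`. -/
noncomputable def pi (i : S) : ℝ :=
  ∏ a ∈ M.anc i, M.p a

/-- The children of `i`. -/
noncomputable def child (i : S) : Finset S :=
  Finset.univ.filter fun k => k ≠ M.r ∧ M.pa k = i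

/-- `T` is the top set of `X`: a subset of `X` whose subtree covers `X` and in which
no state lies in the subtree of a different state. -/
def IsTopSet (X T : Finset S) : Prop :=
  T ⊆ X ∧ X ⊆ M.subF T ∧ ∀ i ∈ T, ∀ k ∈ T, i ≠ k → k ∉ M.subt i

/-- Expected future cost conditional on being in state `a`. -/
noncomputable def cf (c : S → ℝ) (a : S) : ℝ :=
  ∑ i ∈ M.subt a, c i * M.pi i / M.pi a

/-- `V` is the ski-rental value function:
`V γ i = min (γ, c i + Σ_{k ∈ child i} p k · V γ k)`. -/
def IsSkiValue (c : S → ℝ) (V : ℝ → S → ℝ) : Prop :=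
  ∀ γ : ℝ, ∀ i : S, V γ i = min γ (c i + ∑ k ∈ M.child i, M.p k * V γ k)

/-- Expected future cost-to-go `V^f`. -/
noncomputable def Vf (V : ℝ → S → ℝ) (γ : ℝ) (i : S) : ℝ :=
  ∑ k ∈ M.child i, M.p k * V γ k

/-- The candidate optimal state duals `β*(γ)`. -/
noncomputable def betaStar (c : S → ℝ) (V : ℝ → S → ℝ) (γ : ℝ) (i : S) : ℝ :=
  max 0 (c i + M.Vf V γ i - γ)

/-- Feasibility for the dual program `D*(γ)`. -/
def DualFeasible (c : S → ℝ) (γ : ℝ) (β : S → ℝ) : Prop :=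
  (∀ i, 0 ≤ β i) ∧ ∀ a, M.cf c a ≤ γ + ∑ i ∈ M.subt a, β i * M.pi i / M.pi a

/-- Feasibility for the fluid LP (OriginalFluid). -/
def OrigFeasible (lam mu : ℝ) (q ν : S → ℝ) : Prop :=
  (∀ i, 0 ≤ q i) ∧ (∀ i, 0 ≤ ν i) ∧ q M.r = lam ∧
    (∀ i, i ≠ M.r → q i = (q (M.pa i) - ν (M.pa i)) * M.p i) ∧
    (∀ i, ν i ≤ q i) ∧ ∑ i : S, ν i ≤ mu

/-- Feasibility for the fluid LP (SimplerFluid). -/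
def SimpFeasible (lam mu : ℝ) (ν : S → ℝ) : Prop :=
  (∀ i, 0 ≤ ν i) ∧ (∀ i, ∑ a ∈ M.anc i, ν a * M.pi i / M.pi a ≤ lam * M.pi i) ∧
    ∑ i : S, ν i ≤ mu

end TreeMC

/-!
Since `min γ y = y - max 0 (y - γ)`, the value function satisfies the linear recursion
`V(γ, a) = (c - β*)(a) + Σ_{k ∈ child a} p(k) V(γ, k)`. The expected future value `cf g` of any
`g` satisfies the same recursion with `g` in place of `c - β*` (split `sub(a)` into `a` and the
disjoint subtrees of its children, and use `π(k) = p(k) π(a)`), and backward induction over the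
levels shows the recursion has only one solution. Hence `V(γ, ·) = cf (c - β*) = cf c - cf β*`.
-/

namespace TreeMC

variable {S : Type*} [Fintype S] [DecidableEq S] (M : TreeMC S)

lemma mem_anc {i a : S} : a ∈ M.anc i ↔ ∃ n : ℕ, M.pa^[n] i = a := by
  simp [anc]

lemma mem_subt {a i : S} : i ∈ M.subt a ↔ a ∈ M.anc i := by
  simp [subt]

lemma mem_child {a k : S} : k ∈ M.child a ↔ k ≠ M.r ∧ M.pa k = a := by
  simp [child]

lemma level_iterate_pa_le (n : ℕ) (x : S) : M.level (M.pa^[n] x) ≤ M.level x := by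
  induction n generalizing x with
  | zero => rfl
  | succ n ih =>
    rw [Function.iterate_succ_apply]
    by_cases hx : x = M.r
    · subst hx
      rw [M.pa_r]
      exact ih _
    · have := M.level_pa x hx
      have := ih (M.pa x)
      omega

lemma level_iterate_pa_lt {n : ℕ} {x : S} (h : M.pa^[n] x ≠ x) :
    M.level (M.pa^[n] x) < M.level x := by
  cases n with
  | zero => exact absurd rfl h
  | succ n =>
    rw [Function.iterate_succ_apply] at h ⊢
    have hx : x ≠ M.r := by
      rintro rfl
      rw [M.pa_r] at h
      exact h (M.root_unique _ (by simpa [M.level_r] using M.level_iterate_pa_le n M.r))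
    have := M.level_pa x hx
    have := M.level_iterate_pa_le n (M.pa x)
    omega

lemma level_of_mem_child {a k : S} (hk : k ∈ M.child a) : M.level k = M.level a + 1 := by
  obtain ⟨hkr, rfl⟩ := M.mem_child.mp hk
  exact (M.level_pa k hkr).symm

lemma anc_eq_insert_anc_pa {k : S} (hk : k ≠ M.r) : M.anc k = insert k (M.anc (M.pa k)) := by
  ext a
  simp only [mem_anc, mem_insert]
  constructor
  · rintro ⟨_ | n, rfl⟩
    · exact Or.inl rfl
    · exact Or.inr ⟨n, (Function.iterate_succ_apply _ _ _).symm⟩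
  · rintro (rfl | ⟨n, rfl⟩)
    · exact ⟨0, rfl⟩
    · exact ⟨n + 1, Function.iterate_succ_apply _ _ _⟩

lemma notMem_anc_pa {k : S} (hk : k ≠ M.r) : k ∉ M.anc (M.pa k) := by
  rintro h
  obtain ⟨n, hn⟩ := M.mem_anc.mp h
  have := M.level_pa k hk
  have := M.level_iterate_pa_le n (M.pa k)
  rw [hn] at this
  omega

lemma pi_of_mem_child {a k : S} (hk : k ∈ M.child a) : M.pi k = M.p k * M.pi a := by
  obtain ⟨hkr, rfl⟩ := M.mem_child.mp hk
  rw [pi, M.anc_eq_insert_anc_pa hkr, prod_insert (M.notMem_anc_pa hkr), pi]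

lemma pi_pos (i : S) : 0 < M.pi i :=
  prod_pos fun a _ => M.p_pos a

lemma eq_or_exists_mem_child_of_iterate_pa_eq {i a : S} {n : ℕ} (h : M.pa^[n] i = a) :
    i = a ∨ ∃ k ∈ M.child a, ∃ m, M.pa^[m] i = k := by
  induction n generalizing a with
  | zero => exact Or.inl h
  | succ n ih =>
    rw [Function.iterate_succ_apply'] at h
    by_cases hk : M.pa^[n] i = a
    · exact ih hk
    · refine Or.inr ⟨_, M.mem_child.mpr ⟨?_, h⟩, n, rfl⟩
      rintro hr
      rw [hr, M.pa_r] at h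
      exact hk (hr.trans h)

lemma subt_eq_insert_biUnion (a : S) :
    M.subt a = insert a ((M.child a).biUnion M.subt) := by
  ext i
  simp only [mem_insert, mem_biUnion, mem_subt, mem_anc]
  constructor
  · rintro ⟨n, hn⟩
    exact M.eq_or_exists_mem_child_of_iterate_pa_eq hn
  · rintro (rfl | ⟨k, hk, n, rfl⟩)
    · exact ⟨0, rfl⟩
    · exact ⟨n + 1, by rw [Function.iterate_succ_apply', (M.mem_child.mp hk).2]⟩

lemma notMem_biUnion_subt_child (a : S) : a ∉ (M.child a).biUnion M.subt := by
  simp only [mem_biUnion, not_exists, not_and]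
  intro k hk hak
  obtain ⟨n, hn⟩ := M.mem_anc.mp (M.mem_subt.mp hak)
  have hle := M.level_iterate_pa_le n a
  rw [hn, M.level_of_mem_child hk] at hle
  omega

lemma pairwiseDisjoint_subt_child (a : S) : (M.child a : Set S).PairwiseDisjoint M.subt := by
  intro k₁ h₁ k₂ h₂ hne
  rw [Function.onFun, disjoint_left]
  intro i hi₁ hi₂
  obtain ⟨m, hm⟩ := M.mem_anc.mp (M.mem_subt.mp hi₁)
  obtain ⟨n, hn⟩ := M.mem_anc.mp (M.mem_subt.mp hi₂)
  have := M.level_of_mem_child h₁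
  have := M.level_of_mem_child h₂
  -- two states at the same level, one an ancestor of the other, must coincide
  rcases le_total m n with hmn | hnm
  · have h : M.pa^[n - m] k₁ = k₂ := by
      rw [← hm, ← Function.iterate_add_apply, Nat.sub_add_cancel hmn, hn]
    have := M.level_iterate_pa_lt (h ▸ Ne.symm hne : M.pa^[n - m] k₁ ≠ k₁)
    rw [h] at this
    omega
  · have h : M.pa^[m - n] k₂ = k₁ := by
      rw [← hn, ← Function.iterate_add_apply, Nat.sub_add_cancel hnm, hm]
    have := M.level_iterate_pa_lt (h ▸ hne : M.pa^[m - n] k₂ ≠ k₂)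
    rw [h] at this
    omega

lemma sum_subt (a : S) (f : S → ℝ) :
    ∑ i ∈ M.subt a, f i = f a + ∑ k ∈ M.child a, ∑ i ∈ M.subt k, f i := by
  rw [M.subt_eq_insert_biUnion a, sum_insert (M.notMem_biUnion_subt_child a),
    sum_biUnion (M.pairwiseDisjoint_subt_child a)]

lemma cf_eq_add_sum_child (g : S → ℝ) (a : S) :
    M.cf g a = g a + ∑ k ∈ M.child a, M.p k * M.cf g k := by
  rw [cf, M.sum_subt, mul_div_cancel_right₀ _ (M.pi_pos a).ne']
  congr 1
  refine sum_congr rfl fun k hk => ?_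
  rw [cf, mul_sum]
  refine sum_congr rfl fun i _ => ?_
  rw [M.pi_of_mem_child hk]
  field_simp [(M.p_pos k).ne', (M.pi_pos a).ne']

theorem eq_cf_of_forall_eq_add_sum_child {f g : S → ℝ}
    (h : ∀ a, f a = g a + ∑ k ∈ M.child a, M.p k * f k) (a : S) : f a = M.cf g a := by
  rw [h a, M.cf_eq_add_sum_child]
  congr 1
  refine sum_congr rfl fun k hk => ?_
  have := M.level_of_mem_child hk
  have := M.level_lt k
  rw [eq_cf_of_forall_eq_add_sum_child h k]
termination_by M.L - M.level a

lemma cf_sub (f g : S → ℝ) (a : S) : M.cf (f - g) a = M.cf f a - M.cf g a := by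
  simp only [cf, Pi.sub_apply, sub_mul, sub_div, sum_sub_distrib]

end TreeMC

theorem V_eq_cf_sub_betaStar_general {S : Type*} [Fintype S] [DecidableEq S]
    (M : TreeMC S) (c : S → ℝ)
    (V : ℝ → S → ℝ) (hV : M.IsSkiValue c V)
    (γ : ℝ) (a : S) :
    V γ a = M.cf c a - ∑ i ∈ M.subt a, M.betaStar c V γ i * M.pi i / M.pi a := by
  have hrec : ∀ b, V γ b = (c - M.betaStar c V γ) b + ∑ k ∈ M.child b, M.p k * V γ k := by
    intro b
    rw [hV γ b, Pi.sub_apply, TreeMC.betaStar, TreeMC.Vf, sub_add_eq_add_sub,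
      ← min_sub_sub_left, sub_zero, sub_sub_cancel, min_comm]
  rw [M.eq_cf_of_forall_eq_add_sum_child hrec a, M.cf_sub]
  rfl

/-- For every `γ ≥ 0` and every state `a ∈ S`, the ski-rental cost-to-go
function satisfies `V(γ, a) = c^f(a) − Σ_{i ∈ sub(a)} β*_i(γ)·π(i)/π(a)`. -/
theorem V_eq_cf_sub_betaStar {S : Type*} [Fintype S] [DecidableEq S]
    (M : TreeMC S) (c : S → ℝ) (hc : ∀ i, 0 < c i)
    (V : ℝ → S → ℝ) (hV : M.IsSkiValue c V)
    (γ : ℝ) (hγ : 0 ≤ γ) (a : S) :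
    V γ a = M.cf c a - ∑ i ∈ M.subt a, M.betaStar c V γ i * M.pi i / M.pi a :=
  V_eq_cf_sub_betaStar_general M c V hV γ a
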